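/- Let F = {f_0,…,f_{N−1}} be a finite family of C¹-diffeomorphisms of the circle 𝕊¹ and μ a non-degenerate probability measure on I = {0,…,N−1}. Let x,y ∈ 𝕊¹ with x ≠ y, and let i ∈ I^ℕ be such that one of the two closed arcs I_i with endpoints x and y satisfies |f_i^n(I_i)| → 0 as n → ∞ (where |·| denotes arc length). Then lim_{n→∞} (1/n) log max_{z,w ∈ I_i} | (f_i^n)'(z) / (f_i^n)'(w) | = 0. Moreover, if the set Ω^{x,y} of sequences i with this property has full μ^ℕ-measure, then lim_{n→∞} (1/n) ∫ log max_{z,w ∈ I_i} | (f_i^n)'(z) / (f_i^n)'(w) | dμ^ℕ(i) = 0. -/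

import Mathlib

/-! By the chain rule, `log |(f_i^n)'(z) / (f_i^n)'(w)|` is the sum over `k < n` of the
differences of `log g_{i_k}` at the `k`-th images of `z` and `w`. These images lie in
`f_i^k(I_i)`, a connected arc whose diameter is at most its length, which tends to `0`; by uniform
continuity of the finitely many `log g_j` the `k`-th term tends to `0`, hence so does its Cesàro
mean. Every term is bounded by one constant, so the averaged statement follows by dominated
convergence. -/

open MeasureTheory Topology Filter

noncomputable section

/-- Iteration of the IFS: `ifsIter f i n = f (i (n-1)) ∘ ⋯ ∘ f (i 0)`, i.e. `f_i^n`. -/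
def ifsIter {α : Type*} {N : ℕ} (f : Fin N → α → α) (i : ℕ → Fin N) : ℕ → α → α
  | 0, x => x
  | n + 1, x => f (i n) (ifsIter f i n x)

/-- `P` is the Bernoulli product measure `μ^ℕ` on `ℕ → Fin N` with weights `p`. -/
def IsBernoulli {N : ℕ} (p : Fin N → ℝ) (P : Measure (ℕ → Fin N)) : Prop :=
  IsProbabilityMeasure P ∧
    ∀ (n : ℕ) (w : Fin n → Fin N),
      P {i | ∀ k : Fin n, i (k : ℕ) = w k} = ∏ k : Fin n, ENNReal.ofReal (p (w k))

/-- Hypothesis (H): there is no probability measure invariant under every map of the IFS. -/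
def HypH {N : ℕ} (f : Fin N → UnitAddCircle → UnitAddCircle) : Prop :=
  ¬ ∃ m : Measure UnitAddCircle, IsProbabilityMeasure m ∧
      ∀ j : Fin N, Measure.map (f j) m = m

/-- Property (P): proximality. -/
def HypP {N : ℕ} (f : Fin N → UnitAddCircle → UnitAddCircle) : Prop :=
  ∀ x y : UnitAddCircle, ∃ i : ℕ → Fin N, ∃ φ : ℕ → ℕ, StrictMono φ ∧
    Tendsto (fun k => dist (ifsIter f i (φ k) x) (ifsIter f i (φ k) y)) atTop (𝓝 0)

/-- `ν` is a `μ`-stationary measure for the IFS with probabilities: `ν = Σ_j p_j (f_j)_* ν`. -/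
def IFSStationary {N : ℕ} (p : Fin N → ℝ) (f : Fin N → UnitAddCircle → UnitAddCircle)
    (ν : Measure UnitAddCircle) : Prop :=
  ν = ∑ j : Fin N, ENNReal.ofReal (p j) • Measure.map (f j) ν

/-- Hölder continuity of `h`. -/
def IsHolderFn (h : UnitAddCircle → ℝ) : Prop :=
  ∃ H > (0 : ℝ), ∃ β ∈ Set.Ioc (0 : ℝ) 1, ∀ x y, |h x - h y| ≤ H * dist x y ^ β

/-- `g j` is the modulus of the derivative of `f j`, expressed as a metric derivative. -/
def IsAbsDerivOf {N : ℕ} (f : Fin N → UnitAddCircle → UnitAddCircle)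
    (g : Fin N → UnitAddCircle → ℝ) : Prop :=
  ∀ (j : Fin N) (x : UnitAddCircle),
    Tendsto (fun y => dist (f j x) (f j y) / dist x y) (𝓝[≠] x) (𝓝 (g j x))

/-- `S` is the closed (positively oriented) arc from `x` to `y` in the circle. -/
def IsClosedArc (x y : UnitAddCircle) (S : Set UnitAddCircle) : Prop :=
  ∃ a b : ℝ, a < b ∧ b - a < 1 ∧ ((a : UnitAddCircle) = x) ∧ ((b : UnitAddCircle) = y) ∧
    S = (fun t : ℝ => (t : UnitAddCircle)) '' Set.Icc a b

/-- `|(f_i^n)'(z)|`, computed via the chain rule from the moduli `g j` of the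
derivatives of the maps `f j`. -/
def pderiv {N : ℕ} (f : Fin N → UnitAddCircle → UnitAddCircle)
    (g : Fin N → UnitAddCircle → ℝ) (i : ℕ → Fin N) (n : ℕ) (z : UnitAddCircle) : ℝ :=
  ∏ k ∈ Finset.range n, g (i k) (ifsIter f i k z)

/-- `max_{z,w ∈ S} |(f_i^n)'(z) / (f_i^n)'(w)|`. -/
def maxRatio {N : ℕ} (f : Fin N → UnitAddCircle → UnitAddCircle)
    (g : Fin N → UnitAddCircle → ℝ) (i : ℕ → Fin N) (n : ℕ) (S : Set UnitAddCircle) : ℝ :=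
  sSup ((fun zw : UnitAddCircle × UnitAddCircle =>
    |pderiv f g i n zw.1 / pderiv f g i n zw.2|) '' (S ×ˢ S))

open Set Metric Bornology

namespace AddCircle

theorem dist_coe_le_abs_sub {T : ℝ} (s t : ℝ) : dist (s : AddCircle T) t ≤ |s - t| := by
  rw [dist_eq_norm, ← QuotientAddGroup.mk_sub]
  exact QuotientAddGroup.norm_mk_le_norm

/-- Cutting the circle at a point outside `K` turns `K` into a compact interval of the same
length, and the lift can only increase distances. -/
theorem diam_le_toReal_volume {T : ℝ} [Fact (0 < T)] {K : Set (AddCircle T)} (hK : IsCompact K)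
    (hKc : IsPreconnected K) (hKu : K ≠ univ) : diam K ≤ (volume K).toReal := by
  obtain ⟨q, hq⟩ := (ne_univ_iff_exists_notMem K).1 hKu
  obtain ⟨θ, rfl⟩ := QuotientAddGroup.mk_surjective q
  let φ : AddCircle T → ℝ := fun z => equivIoc T θ z
  have hφ : ∀ z, (φ z : AddCircle T) = z := (equivIoc T θ).symm_apply_apply
  have hφK : ContinuousOn φ K := fun z hz =>
    (continuous_subtype_val.continuousAt.comp
      (continuousAt_equivIoc T θ fun h => hq (h ▸ hz))).continuousWithinAt
  have hvol : volume K = volume (φ '' K) := by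
    rw [add_projection_respects_measure T θ hK.isClosed.measurableSet]
    congr 1
    ext t
    constructor
    · rintro ⟨ht, htI⟩
      refine ⟨t, ht, ?_⟩
      show ((equivIoc T θ t : Ioc θ (θ + T)) : ℝ) = t
      rw [show equivIoc T θ t = ⟨t, htI⟩ from (Equiv.eq_symm_apply _).1 rfl]
    · rintro ⟨z, hz, rfl⟩
      exact ⟨show ((φ z : ℝ) : AddCircle T) ∈ K from (hφ z).symm ▸ hz, (equivIoc T θ z).2⟩
  refine diam_le_of_forall_dist_le ENNReal.toReal_nonneg fun a ha b hb => ?_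
  obtain ⟨u, v, huv⟩ : ∃ u v, φ '' K = Icc u v :=
    ⟨_, _, eq_Icc_of_connected_compact ⟨⟨φ a, mem_image_of_mem φ ha⟩, hKc.image φ hφK⟩
      (hK.image_of_continuousOn hφK)⟩
  obtain ⟨hua, hav⟩ : φ a ∈ Icc u v := huv ▸ mem_image_of_mem φ ha
  obtain ⟨hub, hbv⟩ : φ b ∈ Icc u v := huv ▸ mem_image_of_mem φ hb
  rw [hvol, huv, Real.volume_Icc, ENNReal.toReal_ofReal (by linarith)]
  calc dist a b = dist (φ a : AddCircle T) (φ b) := by rw [hφ, hφ]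
    _ ≤ |φ a - φ b| := dist_coe_le_abs_sub _ _
    _ ≤ v - u := abs_sub_le_iff.2 ⟨by linarith, by linarith⟩

end AddCircle

theorem IsClosedArc.isCompact {x y : UnitAddCircle} {S : Set UnitAddCircle}
    (h : IsClosedArc x y S) : IsCompact S := by
  obtain ⟨a, b, -, -, -, -, rfl⟩ := h
  exact isCompact_Icc.image (AddCircle.continuous_mk' 1)

theorem IsClosedArc.isConnected {x y : UnitAddCircle} {S : Set UnitAddCircle}
    (h : IsClosedArc x y S) : IsConnected S := by
  obtain ⟨a, b, hab, -, -, -, rfl⟩ := h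
  exact (isConnected_Icc hab.le).image _ (AddCircle.continuous_mk' 1).continuousOn

theorem UniformEquicontinuous.tendsto_diam_image {ι X Y : Type*} [PseudoMetricSpace X]
    [PseudoMetricSpace Y] {F : ι → X → Y} (hF : UniformEquicontinuous F) {A : ℕ → Set X}
    (hA : ∀ k, IsBounded (A k)) (hdiam : Tendsto (fun k => diam (A k)) atTop (𝓝 0))
    (j : ℕ → ι) : Tendsto (fun k => diam (F (j k) '' A k)) atTop (𝓝 0) := by
  refine Metric.tendsto_nhds.2 fun ε hε => ?_
  obtain ⟨δ, hδ, hFδ⟩ := Metric.uniformEquicontinuous_iff.1 hF (ε / 2) (half_pos hε)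
  filter_upwards [Metric.tendsto_nhds.1 hdiam δ hδ] with k hk
  rw [Real.dist_0_eq_abs, abs_of_nonneg diam_nonneg] at hk ⊢
  have : diam (F (j k) '' A k) ≤ ε / 2 :=
    diam_le_of_forall_dist_le (half_pos hε).le <| forall_mem_image.2 fun z hz =>
      forall_mem_image.2 fun w hw =>
        (hFδ z w ((dist_le_diam_of_mem (hA k) hz hw).trans_lt hk) (j k)).le
  linarith

/-- No measurability is needed: a non-integrable `F n` has integral `0`. -/
theorem tendsto_integral_of_abs_le_of_tendsto_zero {Ω : Type*} [MeasurableSpace Ω]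
    {P : Measure Ω} [IsFiniteMeasure P] {F : ℕ → Ω → ℝ} {C : ℝ}
    (hle : ∀ n, ∀ᵐ ω ∂P, |F n ω| ≤ C) (hlim : ∀ᵐ ω ∂P, Tendsto (F · ω) atTop (𝓝 0)) :
    Tendsto (fun n => ∫ ω, F n ω ∂P) atTop (𝓝 0) := by
  classical
  let G : ℕ → Ω → ℝ := fun n => if Integrable (F n) P then F n else 0
  have hG : ∀ n ω, G n ω = F n ω ∨ G n ω = 0 := fun n ω => by
    by_cases h : Integrable (F n) P <;> simp [G, h]
  have hFG : ∀ n, ∫ ω, F n ω ∂P = ∫ ω, G n ω ∂P := fun n => by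
    by_cases h : Integrable (F n) P
    · simp [G, h]
    · simp [G, h, integral_undef h]
  simp_rw [hFG]
  rw [← integral_zero Ω ℝ (μ := P)]
  refine tendsto_integral_of_dominated_convergence (fun _ => C) (fun n => ?_)
    (integrable_const C) (fun n => ?_) ?_
  · by_cases h : Integrable (F n) P
    · simpa [G, h] using h.aestronglyMeasurable
    · simpa only [G, h, if_false] using aestronglyMeasurable_zero
  · filter_upwards [hle n] with ω hω
    rcases hG n ω with h | h <;> rw [h, Real.norm_eq_abs]
    exacts [hω, (abs_zero (α := ℝ)).symm ▸ (abs_nonneg _).trans hω]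
  · filter_upwards [hlim] with ω hω
    refine squeeze_zero_norm (fun n => ?_) (tendsto_zero_iff_norm_tendsto_zero.1 hω)
    rcases hG n ω with h | h <;> simp [h]

section Distortion

variable {N : ℕ} {f : Fin N → UnitAddCircle → UnitAddCircle} {g : Fin N → UnitAddCircle → ℝ}
  {i : ℕ → Fin N} {n : ℕ} {S : Set UnitAddCircle}

theorem continuous_ifsIter {X : Type*} [TopologicalSpace X] {f : Fin N → X → X}
    (hf : ∀ j, Continuous (f j)) (i : ℕ → Fin N) : ∀ n, Continuous (ifsIter f i n)
  | 0 => continuous_id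
  | n + 1 => (hf (i n)).comp (continuous_ifsIter hf i n)

theorem pderiv_pos (hg : ∀ j z, 0 < g j z) (z : UnitAddCircle) : 0 < pderiv f g i n z :=
  Finset.prod_pos fun _ _ => hg _ _

theorem log_pderiv_div_pderiv (hg : ∀ j z, 0 < g j z) (z w : UnitAddCircle) :
    Real.log (pderiv f g i n z / pderiv f g i n w) = ∑ k ∈ Finset.range n,
      (Real.log (g (i k) (ifsIter f i k z)) - Real.log (g (i k) (ifsIter f i k w))) := by
  rw [Real.log_div (pderiv_pos hg z).ne' (pderiv_pos hg w).ne', pderiv, pderiv,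
    Real.log_prod fun _ _ => (hg _ _).ne', Real.log_prod fun _ _ => (hg _ _).ne',
    Finset.sum_sub_distrib]

theorem abs_pderiv_div_pderiv_le (hg : ∀ j z, 0 < g j z) {c : ℕ → ℝ}
    (hc : ∀ k < n, ∀ z ∈ S, ∀ w ∈ S,
      Real.log (g (i k) (ifsIter f i k z)) - Real.log (g (i k) (ifsIter f i k w)) ≤ c k)
    {z w : UnitAddCircle} (hz : z ∈ S) (hw : w ∈ S) :
    |pderiv f g i n z / pderiv f g i n w| ≤ Real.exp (∑ k ∈ Finset.range n, c k) := by
  have hpos : 0 < pderiv f g i n z / pderiv f g i n w :=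
    div_pos (pderiv_pos hg z) (pderiv_pos hg w)
  rw [abs_of_pos hpos, ← Real.log_le_iff_le_exp hpos, log_pderiv_div_pderiv hg]
  exact Finset.sum_le_sum fun k hk => hc k (Finset.mem_range.1 hk) z hz w hw

theorem log_maxRatio_mem_Icc (hg : ∀ j z, 0 < g j z) (hS : S.Nonempty) {c : ℕ → ℝ}
    (hc : ∀ k < n, ∀ z ∈ S, ∀ w ∈ S,
      Real.log (g (i k) (ifsIter f i k z)) - Real.log (g (i k) (ifsIter f i k w)) ≤ c k) :
    Real.log (maxRatio f g i n S) ∈ Icc 0 (∑ k ∈ Finset.range n, c k) := by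
  have hle : ∀ t ∈ (fun zw : UnitAddCircle × UnitAddCircle =>
      |pderiv f g i n zw.1 / pderiv f g i n zw.2|) '' (S ×ˢ S),
      t ≤ Real.exp (∑ k ∈ Finset.range n, c k) := by
    rintro _ ⟨⟨z, w⟩, ⟨hz, hw⟩, rfl⟩
    exact abs_pderiv_div_pderiv_le hg hc hz hw
  obtain ⟨z, hz⟩ := hS
  have hone : 1 ≤ maxRatio f g i n S := le_csSup ⟨_, hle⟩
    ⟨(z, z), ⟨hz, hz⟩, by simp [div_self (pderiv_pos hg z).ne']⟩
  refine ⟨Real.log_nonneg hone, (Real.log_le_iff_le_exp (one_pos.trans_le hone)).2 ?_⟩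
  exact csSup_le ⟨_, mem_image_of_mem _ (mk_mem_prod hz hz)⟩ hle

theorem exists_log_sub_log_le (hgc : ∀ j, Continuous (g j)) (hg : ∀ j z, 0 < g j z) :
    ∃ D, 0 ≤ D ∧ ∀ j z w, Real.log (g j z) - Real.log (g j w) ≤ D := by
  have hb : IsBounded (⋃ j, range fun z => Real.log (g j z)) :=
    isBounded_iUnion.2 fun j => (isCompact_range ((hgc j).log fun z => (hg j z).ne')).isBounded
  refine ⟨diam (⋃ j, range fun z => Real.log (g j z)), diam_nonneg, fun j z w => ?_⟩
  refine (le_abs_self _).trans ?_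
  rw [← Real.dist_eq]
  exact dist_le_diam_of_mem hb (mem_iUnion_of_mem j (mem_range_self z))
    (mem_iUnion_of_mem j (mem_range_self w))

theorem abs_one_div_mul_log_maxRatio_le (hg : ∀ j z, 0 < g j z) (hS : S.Nonempty) {D : ℝ}
    (hD : 0 ≤ D) (hgD : ∀ j z w, Real.log (g j z) - Real.log (g j w) ≤ D) (n : ℕ) :
    |1 / (n : ℝ) * Real.log (maxRatio f g i n S)| ≤ D := by
  obtain ⟨h0, hD'⟩ := log_maxRatio_mem_Icc (n := n) (c := fun _ => D) hg hS
    fun k _ z _ w _ => hgD (i k) _ _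
  rw [Finset.sum_const, Finset.card_range, nsmul_eq_mul] at hD'
  rw [abs_of_nonneg (by positivity)]
  rcases n.eq_zero_or_pos with rfl | hn
  · simpa using hD
  · rw [one_div_mul_eq_div, div_le_iff₀ (by positivity)]
    linarith

theorem tendsto_one_div_mul_log_maxRatio (hf : ∀ j, Continuous (f j))
    (hgc : ∀ j, Continuous (g j)) (hg : ∀ j z, 0 < g j z) (hSc : IsCompact S)
    (hS : IsConnected S)
    (hvol : Tendsto (fun n => (volume (ifsIter f i n '' S)).toReal) atTop (𝓝 0)) :
    Tendsto (fun n : ℕ => 1 / (n : ℝ) * Real.log (maxRatio f g i n S)) atTop (𝓝 0) := by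
  let A : ℕ → Set UnitAddCircle := fun k => ifsIter f i k '' S
  have hAc : ∀ k, IsCompact (A k) := fun k => hSc.image (continuous_ifsIter hf i k)
  have hdiam : Tendsto (fun k => diam (A k)) atTop (𝓝 0) := by
    refine squeeze_zero' (Eventually.of_forall fun _ => diam_nonneg) ?_ hvol
    filter_upwards [hvol.eventually_lt_const one_pos] with k hk
    refine AddCircle.diam_le_toReal_volume (hAc k)
      (hS.isPreconnected.image _ (continuous_ifsIter hf i k).continuousOn) fun hu => ?_
    simp [A, hu] at hk
  let ψ : Fin N → UnitAddCircle → ℝ := fun j z => Real.log (g j z)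
  have hψ : UniformEquicontinuous ψ := uniformEquicontinuous_finite.2 fun j =>
    CompactSpace.uniformContinuous_of_continuous ((hgc j).log fun z => (hg j z).ne')
  let c : ℕ → ℝ := fun k => diam (ψ (i k) '' A k)
  have hc : Tendsto c atTop (𝓝 0) :=
    hψ.tendsto_diam_image (fun k => (hAc k).isBounded) hdiam i
  have hcS : ∀ k, ∀ z ∈ S, ∀ w ∈ S,
      Real.log (g (i k) (ifsIter f i k z)) - Real.log (g (i k) (ifsIter f i k w)) ≤ c k :=
    fun k z hz w hw => (le_abs_self _).trans <| (Real.dist_eq _ _).symm.trans_le <|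
      dist_le_diam_of_mem ((hAc k).image (hψ.uniformContinuous (i k)).continuous).isBounded
        (mem_image_of_mem _ (mem_image_of_mem _ hz)) (mem_image_of_mem _ (mem_image_of_mem _ hw))
  have hcesaro : Tendsto (fun n : ℕ => 1 / (n : ℝ) * ∑ k ∈ Finset.range n, c k) atTop (𝓝 0) := by
    simpa only [one_div] using hc.cesaro
  refine squeeze_zero (fun n => ?_) (fun n => ?_) hcesaro
  · exact mul_nonneg (by positivity) (log_maxRatio_mem_Icc hg hS.nonempty fun k _ => hcS k).1
  · exact mul_le_mul_of_nonneg_left (log_maxRatio_mem_Icc hg hS.nonempty fun k _ => hcS k).2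
      (by positivity)

end Distortion

theorem stmt19_general {N : ℕ} (f : Fin N → (UnitAddCircle ≃ₜ UnitAddCircle))
    (g : Fin N → UnitAddCircle → ℝ)
    (hgc : ∀ j, Continuous (g j))
    (hgpos : ∀ j x, 0 < g j x)
    (p : Fin N → ℝ)
    (P : Measure (ℕ → Fin N)) (hP : IsBernoulli p P)
    (x y : UnitAddCircle) :
    (∀ (i : ℕ → Fin N) (S : Set UnitAddCircle),
      (IsClosedArc x y S ∨ IsClosedArc y x S) →
      Tendsto (fun n : ℕ => (volume (ifsIter (fun j => ⇑(f j)) i n '' S)).toReal)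
        atTop (𝓝 0) →
      Tendsto (fun n : ℕ => (1 / (n : ℝ)) *
          Real.log (maxRatio (fun j => ⇑(f j)) g i n S)) atTop (𝓝 0)) ∧
    (∀ Ich : (ℕ → Fin N) → Set UnitAddCircle,
      (∀ᵐ i ∂P, (IsClosedArc x y (Ich i) ∨ IsClosedArc y x (Ich i)) ∧
        Tendsto (fun n : ℕ => (volume (ifsIter (fun j => ⇑(f j)) i n '' (Ich i))).toReal)
          atTop (𝓝 0)) →
      Tendsto (fun n : ℕ => (1 / (n : ℝ)) *
          ∫ i, Real.log (maxRatio (fun j => ⇑(f j)) g i n (Ich i)) ∂P) atTop (𝓝 0)) := by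
  have : IsProbabilityMeasure P := hP.1
  have arc : ∀ S, (IsClosedArc x y S ∨ IsClosedArc y x S) → IsCompact S ∧ IsConnected S :=
    fun S hS => hS.elim (fun h => ⟨h.isCompact, h.isConnected⟩)
      fun h => ⟨h.isCompact, h.isConnected⟩
  have pointwise := fun i S hS => tendsto_one_div_mul_log_maxRatio (i := i)
    (fun j => (f j).continuous) hgc hgpos (arc S hS).1 (arc S hS).2
  refine ⟨pointwise, fun Ich hae => ?_⟩
  obtain ⟨D, hD, hgD⟩ := exists_log_sub_log_le hgc hgpos
  simp_rw [← integral_const_mul]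
  refine tendsto_integral_of_abs_le_of_tendsto_zero (C := D) (fun n => ?_) ?_
  · filter_upwards [hae] with i hi
    exact abs_one_div_mul_log_maxRatio_le hgpos (arc _ hi.1).2.nonempty hD hgD n
  · filter_upwards [hae] with i hi
    exact pointwise i _ hi.1 hi.2

theorem stmt19 {N : ℕ} (f : Fin N → (UnitAddCircle ≃ₜ UnitAddCircle))
    (g : Fin N → UnitAddCircle → ℝ)
    (hgc : ∀ j, Continuous (g j))
    (hgpos : ∀ j x, 0 < g j x)
    (hgd : IsAbsDerivOf (fun j => ⇑(f j)) g)
    (p : Fin N → ℝ) (hp : ∀ j, 0 < p j) (hpsum : ∑ j, p j = 1)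
    (P : Measure (ℕ → Fin N)) (hP : IsBernoulli p P)
    (x y : UnitAddCircle) (hxy : x ≠ y) :
    (∀ (i : ℕ → Fin N) (S : Set UnitAddCircle),
      (IsClosedArc x y S ∨ IsClosedArc y x S) →
      Tendsto (fun n : ℕ => (volume (ifsIter (fun j => ⇑(f j)) i n '' S)).toReal)
        atTop (𝓝 0) →
      Tendsto (fun n : ℕ => (1 / (n : ℝ)) *
          Real.log (maxRatio (fun j => ⇑(f j)) g i n S)) atTop (𝓝 0)) ∧
    (∀ Ich : (ℕ → Fin N) → Set UnitAddCircle,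
      (∀ᵐ i ∂P, (IsClosedArc x y (Ich i) ∨ IsClosedArc y x (Ich i)) ∧
        Tendsto (fun n : ℕ => (volume (ifsIter (fun j => ⇑(f j)) i n '' (Ich i))).toReal)
          atTop (𝓝 0)) →
      Tendsto (fun n : ℕ => (1 / (n : ℝ)) *
          ∫ i, Real.log (maxRatio (fun j => ⇑(f j)) g i n (Ich i)) ∂P) atTop (𝓝 0)) :=
  stmt19_general f g hgc hgpos p P hP x y
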